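/- If the energy E(z(t)) of the RCAM trajectory is constant from time t onward and f is strictly increasing, then z(t+1) is a fixed point of the RCAM update; hence every RCAM trajectory (synchronous update, strictly increasing continuous f) converges in finitely many steps to a fixed point. -/

import Mathlib

/-!
The energy `E(z) = -∑_ξ F(m_ξ(z))`, with overlaps `m_ξ(z) = (1/N)⟨z, u^ξ⟩`, is a Lyapunov
function. Since `F' = f` is nondecreasing, `F` lies above its tangent lines, so
`E(z) - E(z') ≥ ∑_ξ f(m_ξ(z)) (m_ξ(z') - m_ξ(z)) = (1/N) ∑_i a_i (z'_i - z_i)`, and for the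
local fields `a_i` every summand `a_i (z'_i - z_i)` is `≥ 0`, strictly positive where a spin flips.
Hence the energy drops strictly at every step that changes the state. The states form a finite
set, so the energy is eventually constant, and from then on the state no longer changes.
-/

open Set

section TangentLine

variable {f F : ℝ → ℝ} {s : Set ℝ}

theorem exists_mem_uIcc_sub_eq_mul_sub (hs : s.OrdConnected)
    (hF : ∀ x ∈ s, HasDerivAt F (f x) x) {x y : ℝ} (hx : x ∈ s) (hy : y ∈ s) :
    ∃ c ∈ uIcc x y, F y - F x = f c * (y - x) := by
  wlog hxy : x ≤ y generalizing x y
  · obtain ⟨c, hc, hcF⟩ := this hy hx (le_of_not_ge hxy)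
    exact ⟨c, uIcc_comm y x ▸ hc, by linarith⟩
  rcases hxy.eq_or_lt with rfl | hxy
  · exact ⟨x, left_mem_uIcc, by ring⟩
  have hxyS : Icc x y ⊆ s := hs.out hx hy
  obtain ⟨c, hc, hcF⟩ := exists_hasDerivAt_eq_slope F f hxy
    (fun w hw => (hF w (hxyS hw)).continuousAt.continuousWithinAt)
    (fun w hw => hF w (hxyS (Ioo_subset_Icc_self hw)))
  refine ⟨c, Icc_subset_uIcc (Ioo_subset_Icc_self hc), ?_⟩
  rw [hcF, div_mul_cancel₀ _ (sub_ne_zero.2 hxy.ne')]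

theorem mul_sub_le_sub_of_hasDerivAt_of_monotoneOn (hs : s.OrdConnected)
    (hF : ∀ x ∈ s, HasDerivAt F (f x) x) (hf : MonotoneOn f s) {x y : ℝ}
    (hx : x ∈ s) (hy : y ∈ s) : f x * (y - x) ≤ F y - F x := by
  obtain ⟨c, hc, hcF⟩ := exists_mem_uIcc_sub_eq_mul_sub hs hF hx hy
  have hcs : c ∈ s := hs.uIcc_subset hx hy hc
  rw [hcF, ← sub_nonneg, ← sub_mul]
  rcases le_total x y with hxy | hyx
  · rw [uIcc_of_le hxy] at hc
    exact mul_nonneg (sub_nonneg.2 (hf hx hcs hc.1)) (sub_nonneg.2 hxy)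
  · rw [uIcc_of_ge hyx] at hc
    exact mul_nonneg_of_nonpos_of_nonpos (sub_nonpos.2 (hf hcs hx hc.2)) (sub_nonpos.2 hyx)

end TangentLine

section SignUpdate

variable {a x x' : ℝ}

theorem mul_sub_pos_of_sign_update (hx : x = 1 ∨ x = -1)
    (hsign : a ≠ 0 → x' = Real.sign a) (hzero : a = 0 → x' = x) (hne : x' ≠ x) :
    0 < a * (x' - x) := by
  have ha : a ≠ 0 := mt hzero hne
  rcases ha.lt_or_gt with hneg | hpos
  · rw [hsign ha, Real.sign_of_neg hneg] at hne ⊢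
    rcases hx with rfl | rfl
    · nlinarith
    · exact absurd rfl hne
  · rw [hsign ha, Real.sign_of_pos hpos] at hne ⊢
    rcases hx with rfl | rfl
    · exact absurd rfl hne
    · nlinarith

theorem mul_sub_nonneg_of_sign_update (hx : x = 1 ∨ x = -1)
    (hsign : a ≠ 0 → x' = Real.sign a) (hzero : a = 0 → x' = x) :
    0 ≤ a * (x' - x) := by
  by_cases hne : x' = x
  · simp [hne]
  · exact (mul_sub_pos_of_sign_update hx hsign hzero hne).le

end SignUpdate

theorem exists_forall_ge_eq_of_finite_range_of_lt {α β : Type*} [LinearOrder β]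
    {z : ℕ → α} (hz : (range z).Finite) (E : α → β)
    (hE : ∀ t, z (t + 1) ≠ z t → E (z (t + 1)) < E (z t)) :
    ∃ T, ∀ t, T ≤ t → z t = z T := by
  have hanti : Antitone (E ∘ z) := antitone_nat_of_succ_le fun t => by
    by_cases h : z (t + 1) = z t
    · simp [h]
    · exact (hE t h).le
  obtain ⟨_, ⟨T, rfl⟩, hmin⟩ := exists_min_image (range z) E hz (range_nonempty z)
  have hstable : ∀ t, T ≤ t → z (t + 1) = z t := fun t hTt => by
    by_contra h
    exact (hE t h).not_ge ((hanti hTt).trans (hmin _ (mem_range_self _)))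
  refine ⟨T, fun t hTt => ?_⟩
  induction t, hTt using Nat.le_induction with
  | base => rfl
  | succ t hTt ih => rw [hstable t hTt, ih]

namespace RCAM

variable {N P : ℕ}

noncomputable def overlap (u : Fin P → Fin N → ℝ) (v : Fin N → ℝ) (ξ : Fin P) : ℝ :=
  1 / (N : ℝ) * ∑ j, v j * u ξ j

noncomputable def localField (f : ℝ → ℝ) (u : Fin P → Fin N → ℝ) (v : Fin N → ℝ) (i : Fin N) : ℝ :=
  ∑ ξ, f (overlap u v ξ) * u ξ i

noncomputable def energy (F : ℝ → ℝ) (u : Fin P → Fin N → ℝ) (v : Fin N → ℝ) : ℝ :=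
  -∑ ξ, F (overlap u v ξ)

def IsSyncUpdate (f : ℝ → ℝ) (u : Fin P → Fin N → ℝ) (v w : Fin N → ℝ) : Prop :=
  ∀ i, (localField f u v i ≠ 0 → w i = Real.sign (localField f u v i)) ∧
    (localField f u v i = 0 → w i = v i)

theorem overlap_mem_Icc {u : Fin P → Fin N → ℝ} {v : Fin N → ℝ}
    (hu : ∀ ξ j, |u ξ j| ≤ 1) (hv : ∀ j, |v j| ≤ 1) (ξ : Fin P) :
    overlap u v ξ ∈ Icc (-1) 1 := by
  rw [mem_Icc, ← abs_le, overlap, one_div_mul_eq_div, abs_div, Nat.abs_cast]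
  refine div_le_one_of_le₀ ?_ N.cast_nonneg
  calc |∑ j, v j * u ξ j| ≤ ∑ j, |v j * u ξ j| := Finset.abs_sum_le_sum_abs _ _
    _ ≤ ∑ _j : Fin N, (1 : ℝ) := Finset.sum_le_sum fun j _ => by
        rw [abs_mul]; exact mul_le_one₀ (hv j) (abs_nonneg _) (hu ξ j)
    _ = N := by simp

theorem sum_mul_overlap_sub (g : Fin P → ℝ) (u : Fin P → Fin N → ℝ) (v w : Fin N → ℝ) :
    ∑ ξ, g ξ * (overlap u w ξ - overlap u v ξ) =
      1 / (N : ℝ) * ∑ i, (∑ ξ, g ξ * u ξ i) * (w i - v i) := by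
  simp only [overlap, Finset.mul_sum, Finset.sum_mul, ← Finset.sum_sub_distrib]
  rw [Finset.sum_comm]
  exact Finset.sum_congr rfl fun i _ => Finset.sum_congr rfl fun ξ _ => by ring

theorem IsSyncUpdate.eq_one_or_eq_neg_one {f : ℝ → ℝ} {u : Fin P → Fin N → ℝ}
    {v w : Fin N → ℝ} (hvw : IsSyncUpdate f u v w) (hv : ∀ i, v i = 1 ∨ v i = -1) (i : Fin N) :
    w i = 1 ∨ w i = -1 := by
  by_cases ha : localField f u v i = 0
  · rw [(hvw i).2 ha]; exact hv i
  · rw [(hvw i).1 ha]; exact (Real.sign_apply_eq_of_ne_zero _ ha).symm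

theorem energy_lt_of_isSyncUpdate {f F : ℝ → ℝ} {u : Fin P → Fin N → ℝ} {v w : Fin N → ℝ}
    (hf : MonotoneOn f (Icc (-1) 1)) (hF : ∀ x ∈ Icc (-1 : ℝ) 1, HasDerivAt F (f x) x)
    (hu : ∀ ξ j, |u ξ j| ≤ 1) (hv : ∀ i, v i = 1 ∨ v i = -1)
    (hvw : IsSyncUpdate f u v w) (hne : w ≠ v) :
    energy F u w < energy F u v := by
  have habs : ∀ {x : Fin N → ℝ}, (∀ i, x i = 1 ∨ x i = -1) → ∀ i, |x i| ≤ 1 :=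
    fun hx i => ((abs_eq zero_le_one).2 (hx i)).le
  have hmem : ∀ ξ, overlap u v ξ ∈ Icc (-1) 1 := overlap_mem_Icc hu (habs hv)
  have hmem' : ∀ ξ, overlap u w ξ ∈ Icc (-1) 1 :=
    overlap_mem_Icc hu (habs (hvw.eq_one_or_eq_neg_one hv))
  obtain ⟨i₀, hi₀⟩ := Function.ne_iff.mp hne
  have hN : (0 : ℝ) < N := Nat.cast_pos.2 i₀.pos
  have hdescent : 0 < ∑ i, localField f u v i * (w i - v i) :=
    Finset.sum_pos' (fun i _ => mul_sub_nonneg_of_sign_update (hv i) (hvw i).1 (hvw i).2)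
      ⟨i₀, Finset.mem_univ _, mul_sub_pos_of_sign_update (hv i₀) (hvw i₀).1 (hvw i₀).2 hi₀⟩
  rw [← sub_pos]
  calc 0 < 1 / (N : ℝ) * ∑ i, localField f u v i * (w i - v i) := by positivity
    _ = ∑ ξ, f (overlap u v ξ) * (overlap u w ξ - overlap u v ξ) :=
        (sum_mul_overlap_sub _ u v w).symm
    _ ≤ ∑ ξ, (F (overlap u w ξ) - F (overlap u v ξ)) := Finset.sum_le_sum fun ξ _ =>
        mul_sub_le_sub_of_hasDerivAt_of_monotoneOn ordConnected_Icc hF hf (hmem ξ) (hmem' ξ)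
    _ = energy F u v - energy F u w := by
        rw [energy, energy, Finset.sum_sub_distrib]; ring

theorem range_finite_of_eq_one_or_eq_neg_one {z : ℕ → Fin N → ℝ}
    (hz : ∀ t i, z t i = 1 ∨ z t i = -1) : (range z).Finite := by
  refine (Set.Finite.pi fun _ => (finite_singleton (-1 : ℝ)).insert 1).subset ?_
  rintro _ ⟨t, rfl⟩ i -
  exact hz t i

end RCAM

theorem rcam_trajectory_converges_to_fixed_point_general
    (N P : ℕ) (f F : ℝ → ℝ)
    (hf_mono : StrictMonoOn f (Set.Icc (-1 : ℝ) 1))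
    (hF : ∀ x ∈ Set.Icc (-1 : ℝ) 1, HasDerivAt F (f x) x)
    (u : Fin P → Fin N → ℝ) (hu : ∀ ξ i, u ξ i = 1 ∨ u ξ i = -1)
    (z : ℕ → Fin N → ℝ) (hz : ∀ t i, z t i = 1 ∨ z t i = -1)
    (hupdate : ∀ t i,
      (∑ ξ, f ((1 / (N : ℝ)) * ∑ j, z t j * u ξ j) * u ξ i) ≠ 0 →
        z (t + 1) i =
          Real.sign (∑ ξ, f ((1 / (N : ℝ)) * ∑ j, z t j * u ξ j) * u ξ i))
    (hupdate0 : ∀ t i,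
      (∑ ξ, f ((1 / (N : ℝ)) * ∑ j, z t j * u ξ j) * u ξ i) = 0 →
        z (t + 1) i = z t i) :
    (∀ t, (∀ s, t ≤ s →
        -(∑ ξ, F ((1 / (N : ℝ)) * ∑ j, z s j * u ξ j)) =
        -(∑ ξ, F ((1 / (N : ℝ)) * ∑ j, z t j * u ξ j))) →
      ∀ i, (∑ ξ, f ((1 / (N : ℝ)) * ∑ j, z (t + 1) j * u ξ j) * u ξ i) ≠ 0 →
        z (t + 1) i =
          Real.sign (∑ ξ, f ((1 / (N : ℝ)) * ∑ j, z (t + 1) j * u ξ j) * u ξ i)) ∧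
    (∃ T, ∀ t, T ≤ t → z t = z T) := by
  have hstep : ∀ t, z (t + 1) ≠ z t → RCAM.energy F u (z (t + 1)) < RCAM.energy F u (z t) :=
    fun t => RCAM.energy_lt_of_isSyncUpdate hf_mono.monotoneOn hF
      (fun ξ j => ((abs_eq zero_le_one).2 (hu ξ j)).le) (hz t)
      (fun i => ⟨hupdate t i, hupdate0 t i⟩)
  refine ⟨fun t hconst i hfield => ?_, exists_forall_ge_eq_of_finite_range_of_lt
    (RCAM.range_finite_of_eq_one_or_eq_neg_one hz) _ hstep⟩
  have hfixed : z (t + 1 + 1) = z (t + 1) := by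
    by_contra hne
    exact (hstep (t + 1) hne).ne ((hconst _ (by omega)).trans (hconst _ (by omega)).symm)
  simpa only [hfixed] using hupdate (t + 1) i hfield

/-- If the energy of the synchronous RCAM trajectory (strictly increasing
continuous activation `f`) is constant from time `t` onward, then `z (t+1)` is a
fixed point of the RCAM update; hence every trajectory converges in finitely
many steps to a fixed point. -/
theorem rcam_trajectory_converges_to_fixed_point
    (N P : ℕ) (hN : 0 < N) (f F : ℝ → ℝ)
    (hf_cont : ContinuousOn f (Set.Icc (-1 : ℝ) 1))
    (hf_mono : StrictMonoOn f (Set.Icc (-1 : ℝ) 1))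
    (hF : ∀ x ∈ Set.Icc (-1 : ℝ) 1, HasDerivAt F (f x) x)
    (u : Fin P → Fin N → ℝ) (hu : ∀ ξ i, u ξ i = 1 ∨ u ξ i = -1)
    (z : ℕ → Fin N → ℝ) (hz : ∀ t i, z t i = 1 ∨ z t i = -1)
    (hupdate : ∀ t i,
      (∑ ξ, f ((1 / (N : ℝ)) * ∑ j, z t j * u ξ j) * u ξ i) ≠ 0 →
        z (t + 1) i =
          Real.sign (∑ ξ, f ((1 / (N : ℝ)) * ∑ j, z t j * u ξ j) * u ξ i))
    (hupdate0 : ∀ t i,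
      (∑ ξ, f ((1 / (N : ℝ)) * ∑ j, z t j * u ξ j) * u ξ i) = 0 →
        z (t + 1) i = z t i) :
    (∀ t, (∀ s, t ≤ s →
        -(∑ ξ, F ((1 / (N : ℝ)) * ∑ j, z s j * u ξ j)) =
        -(∑ ξ, F ((1 / (N : ℝ)) * ∑ j, z t j * u ξ j))) →
      ∀ i, (∑ ξ, f ((1 / (N : ℝ)) * ∑ j, z (t + 1) j * u ξ j) * u ξ i) ≠ 0 →
        z (t + 1) i =
          Real.sign (∑ ξ, f ((1 / (N : ℝ)) * ∑ j, z (t + 1) j * u ξ j) * u ξ i)) ∧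
    (∃ T, ∀ t, T ≤ t → z t = z T) :=
  rcam_trajectory_converges_to_fixed_point_general N P f F hf_mono hF u hu z hz hupdate hupdate0
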